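/- Let p ≥ n > d/2 + 1 be real, d ≥ 2. For every k ∈ ℤ^d \ {0}, the sum G_{pn}(k) := 4 Σ_{h ∈ ℤ^d \ {0,k}} (|k|^p − |k−h|^p)^2 |P_{h,k−h}|^2 / (|h|^p |k−h|^{n−1} + |h|^n |k−h|^{p−1})^2 is finite, and sup_{k ∈ ℤ^d \ {0}} G_{pn}(k) ≤ 2^{2p} p^2 ζ_{2n−2}, where ζ_{2n−2} := Σ_{h ∈ ℤ^d \ {0}} |h|^{−(2n−2)} < ∞. -/

import Mathlib

open scoped BigOperators
noncomputable section

/-- The lattice point `h ∈ ℤ^d` viewed as a vector of `ℝ^d`. -/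
def rvec {d : ℕ} (h : Fin d → ℤ) : EuclideanSpace ℝ (Fin d) :=
  (WithLp.equiv 2 (Fin d → ℝ)).symm (fun i => (h i : ℝ))

/-- The lattice point `h ∈ ℤ^d` viewed as a vector of `ℂ^d`. -/
def cvec {d : ℕ} (h : Fin d → ℤ) : EuclideanSpace ℂ (Fin d) :=
  (WithLp.equiv 2 (Fin d → ℂ)).symm (fun i => (h i : ℂ))

/-- The bilinear map `P_{hℓ}(a,b) = ((a·ℓ)/|ℓ|) Π_{h+ℓ} b`, where `Π_k` is the (Hermitian)
orthogonal projection of `ℂ^d` onto `k^⊥`. -/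
def Phl {d : ℕ} (h ℓ : Fin d → ℤ) (a b : EuclideanSpace ℂ (Fin d)) :
    EuclideanSpace ℂ (Fin d) :=
  ((∑ i, a i * (ℓ i : ℂ)) / (‖rvec ℓ‖ : ℂ)) •
    ((Submodule.orthogonalProjectionOnto ((ℂ ∙ cvec (h + ℓ))ᗮ) b : (ℂ ∙ cvec (h + ℓ))ᗮ) :
      EuclideanSpace ℂ (Fin d))

/-- The set of admissible constants `Q` for the bilinear map `P_{hℓ}` restricted to
`h^⊥ × ℓ^⊥` (bilinear-dot-product orthogonality with the real vectors `h`, `ℓ`). -/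
def bilinSet {d : ℕ} (h ℓ : Fin d → ℤ) : Set ℝ :=
  {Q : ℝ | 0 ≤ Q ∧ ∀ a b : EuclideanSpace ℂ (Fin d),
    (∑ i, (h i : ℂ) * a i) = 0 → (∑ i, (ℓ i : ℂ) * b i) = 0 →
      ‖Phl h ℓ a b‖ ≤ Q * ‖a‖ * ‖b‖}


/-- The norm of the bilinear map `P_{hℓ}` on `h^⊥ × ℓ^⊥`. -/
def bilinNorm {d : ℕ} (h ℓ : Fin d → ℤ) : ℝ := sInf (bilinSet h ℓ)

/-- Euclidean norm of a lattice point of `ℤ^d`. -/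
def latNorm {d : ℕ} (h : Fin d → ℤ) : ℝ := Real.sqrt (∑ i, ((h i : ℝ)) ^ 2)

/-- The general term of the sum defining `G_{pn}(k)` (without the prefactor `4`). -/
def Gterm {d : ℕ} (p n : ℝ) (k h : Fin d → ℤ) : ℝ :=
  (latNorm k ^ p - latNorm (k - h) ^ p) ^ 2 * bilinNorm h (k - h) ^ 2 /
    (latNorm h ^ p * latNorm (k - h) ^ (n - 1) +
      latNorm h ^ n * latNorm (k - h) ^ (p - 1)) ^ 2

/-!
Each summand of `G_{pn}(k)` is at most `2^{2p-4} p² (|h|^{-(2n-2)} + |k-h|^{-(2n-2)})`.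
Indeed `|P_{h,k-h}| ≤ 1`; the mean value inequality bounds `||k|^p - |k-h|^p|` by
`p |h| (|h| + |k-h|)^{p-1}`; convexity of `t ↦ t^{p-1}` splits this into
`p 2^{p-2} (|h|^p + |h| |k-h|^{p-1})`, and `min(|h|,|k-h|)^{n-1}` times the latter is at most the
denominator. Since `h ↦ h` and `h ↦ k - h` are injective, each of the two resulting sums is at
most `ζ_{2n-2}`, which is finite because `2n - 2 > d` (the `p`-series of the lattice `ℤ^d`).
-/

namespace Real

lemma rpow_add_le_mul_rpow_add_rpow {a b q : ℝ} (ha : 0 ≤ a) (hb : 0 ≤ b) (hq : 1 ≤ q) :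
    (a + b) ^ q ≤ 2 ^ (q - 1) * (a ^ q + b ^ q) := by
  lift a to NNReal using ha
  lift b to NNReal using hb
  exact_mod_cast NNReal.rpow_add_le_mul_rpow_add_rpow a b hq

lemma rpow_sub_rpow_le_of_le {x y p : ℝ} (hy : 0 ≤ y) (hyx : y ≤ x) (hp : 1 ≤ p) :
    x ^ p - y ^ p ≤ p * (x - y) * x ^ (p - 1) := by
  rcases hyx.eq_or_lt' with rfl | hx
  · simp
  have hx : 0 < x := hy.trans_lt hx
  -- Bernoulli's inequality for `(y / x) ^ p`, rescaled by `x ^ p`.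
  have bernoulli := one_add_mul_self_le_rpow_one_add (s := y / x - 1)
    (by linarith [div_nonneg hy hx.le]) hp
  rw [add_sub_cancel, div_rpow hy hx.le, le_div_iff₀ (rpow_pos_of_pos hx p)] at bernoulli
  have hxp : x ^ p = x ^ (p - 1) * x := by rw [rpow_sub_one hx.ne', div_mul_cancel₀ _ hx.ne']
  have hscale : (y / x - 1) * x ^ p = (y - x) * x ^ (p - 1) := by
    rw [hxp]; field_simp
  nlinarith [hscale]

lemma abs_rpow_sub_rpow_le {x y p : ℝ} (hx : 0 ≤ x) (hy : 0 ≤ y) (hp : 1 ≤ p) :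
    |x ^ p - y ^ p| ≤ p * |x - y| * max x y ^ (p - 1) := by
  wlog hyx : y ≤ x generalizing x y
  · rw [abs_sub_comm, abs_sub_comm x, max_comm]
    exact this hy hx (le_of_not_ge hyx)
  rw [abs_of_nonneg (by linarith [rpow_le_rpow hy hyx (by linarith : 0 ≤ p)]),
    abs_of_nonneg (sub_nonneg.2 hyx), max_eq_left hyx]
  exact rpow_sub_rpow_le_of_le hy hyx hp

end Real

open Real

lemma abs_rpow_sub_rpow_le_of_abs_sub_le {a b K p : ℝ} (ha : 0 ≤ a) (hb : 0 ≤ b) (hK : 0 ≤ K)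
    (hKb : |K - b| ≤ a) (hp : 2 ≤ p) :
    |K ^ p - b ^ p| ≤ p * 2 ^ (p - 2) * (a ^ p + a * b ^ (p - 1)) := by
  have hmax : max K b ≤ a + b := max_le (by linarith [le_abs_self (K - b)]) (by linarith)
  calc |K ^ p - b ^ p| ≤ p * |K - b| * max K b ^ (p - 1) :=
        abs_rpow_sub_rpow_le hK hb (by linarith)
    _ ≤ p * a * (a + b) ^ (p - 1) := by gcongr; linarith
    _ ≤ p * a * (2 ^ (p - 1 - 1) * (a ^ (p - 1) + b ^ (p - 1))) := by
      gcongr; exact rpow_add_le_mul_rpow_add_rpow ha hb (by linarith)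
    _ = p * 2 ^ (p - 2) * (a * a ^ (p - 1) + a * b ^ (p - 1)) := by ring_nf
    _ = p * 2 ^ (p - 2) * (a ^ p + a * b ^ (p - 1)) := by
      rw [mul_comm a, ← rpow_add_one' ha (by linarith), sub_add_cancel]

lemma min_rpow_mul_le {a b p n : ℝ} (ha : 0 < a) (hb : 0 < b) (hn : 1 ≤ n) :
    min a b ^ (n - 1) * (a ^ p + a * b ^ (p - 1)) ≤
      a ^ p * b ^ (n - 1) + a ^ n * b ^ (p - 1) := by
  have hma : min a b ^ (n - 1) ≤ a ^ (n - 1) :=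
    rpow_le_rpow (by positivity) (min_le_left a b) (by linarith)
  have hmb : min a b ^ (n - 1) ≤ b ^ (n - 1) :=
    rpow_le_rpow (by positivity) (min_le_right a b) (by linarith)
  have han : a ^ (n - 1) * a = a ^ n := by rw [← rpow_add_one ha.ne', sub_add_cancel]
  calc min a b ^ (n - 1) * (a ^ p + a * b ^ (p - 1))
      = min a b ^ (n - 1) * a ^ p + min a b ^ (n - 1) * a * b ^ (p - 1) := by ring
    _ ≤ b ^ (n - 1) * a ^ p + a ^ (n - 1) * a * b ^ (p - 1) := by gcongr
    _ = a ^ p * b ^ (n - 1) + a ^ n * b ^ (p - 1) := by rw [han, mul_comm]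

lemma one_div_rpow_min_le {a b s : ℝ} (ha : 0 ≤ a) (hb : 0 ≤ b) :
    1 / min a b ^ s ≤ 1 / a ^ s + 1 / b ^ s := by
  rcases min_choice a b with h | h <;> rw [h]
  · linarith [one_div_nonneg.2 (rpow_nonneg hb s)]
  · linarith [one_div_nonneg.2 (rpow_nonneg ha s)]

lemma sq_rpow_sub_rpow_mul_sq_div_le {a b K Q p n : ℝ} (ha : 0 < a) (hb : 0 < b) (hK : 0 ≤ K)
    (hKb : |K - b| ≤ a) (hQ : |Q| ≤ 1) (hn : 1 ≤ n) (hp : 2 ≤ p) :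
    (K ^ p - b ^ p) ^ 2 * Q ^ 2 / (a ^ p * b ^ (n - 1) + a ^ n * b ^ (p - 1)) ^ 2 ≤
      2 ^ (2 * p - 4) * p ^ 2 * (1 / a ^ (2 * n - 2) + 1 / b ^ (2 * n - 2)) := by
  set D := a ^ p * b ^ (n - 1) + a ^ n * b ^ (p - 1)
  have hD : 0 < D := by positivity
  have hm : 0 < min a b ^ (n - 1) := rpow_pos_of_pos (lt_min ha hb) _
  have hfrac : |(K ^ p - b ^ p) * Q / D| ≤ p * 2 ^ (p - 2) / min a b ^ (n - 1) := by
    rw [abs_div, abs_of_pos hD, abs_mul, div_le_div_iff₀ hD hm]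
    calc |K ^ p - b ^ p| * |Q| * min a b ^ (n - 1)
        ≤ |K ^ p - b ^ p| * min a b ^ (n - 1) := by
          gcongr; exact mul_le_of_le_one_right (abs_nonneg _) hQ
      _ ≤ p * 2 ^ (p - 2) * (a ^ p + a * b ^ (p - 1)) * min a b ^ (n - 1) := by
          gcongr; exact abs_rpow_sub_rpow_le_of_abs_sub_le ha.le hb.le hK hKb hp
      _ = p * 2 ^ (p - 2) * (min a b ^ (n - 1) * (a ^ p + a * b ^ (p - 1))) := by ring
      _ ≤ p * 2 ^ (p - 2) * D := by gcongr; exact min_rpow_mul_le ha hb hn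
  calc (K ^ p - b ^ p) ^ 2 * Q ^ 2 / D ^ 2 = |(K ^ p - b ^ p) * Q / D| ^ 2 := by
        rw [sq_abs, div_pow, mul_pow]
    _ ≤ (p * 2 ^ (p - 2) / min a b ^ (n - 1)) ^ 2 := by gcongr
    _ = 2 ^ (2 * p - 4) * p ^ 2 * (1 / min a b ^ (2 * n - 2)) := by
        rw [show 2 * p - 4 = (p - 2) * (2 : ℕ) by push_cast; ring,
          show 2 * n - 2 = (n - 1) * (2 : ℕ) by push_cast; ring,
          rpow_mul_natCast (by norm_num), rpow_mul_natCast (lt_min ha hb).le]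
        ring
    _ ≤ 2 ^ (2 * p - 4) * p ^ 2 * (1 / a ^ (2 * n - 2) + 1 / b ^ (2 * n - 2)) := by
        gcongr; exact one_div_rpow_min_le ha.le hb.le

section Lattice

variable {d : ℕ}

lemma rvec_injective : Function.Injective (rvec (d := d)) := fun a b hab =>
  funext fun i => by simpa [rvec] using congrArg (· i) hab

lemma rvec_sub (a b : Fin d → ℤ) : rvec (a - b) = rvec a - rvec b := by
  ext i
  simp [rvec]

lemma latNorm_eq_norm (h : Fin d → ℤ) : latNorm h = ‖rvec h‖ := by
  simp [latNorm, EuclideanSpace.norm_eq, rvec]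

lemma latNorm_nonneg (h : Fin d → ℤ) : 0 ≤ latNorm h := Real.sqrt_nonneg _

lemma latNorm_pos {h : Fin d → ℤ} (hh : h ≠ 0) : 0 < latNorm h := by
  rw [latNorm_eq_norm, norm_pos_iff]
  intro h0
  exact hh (rvec_injective (h0.trans (by ext; simp [rvec])))

lemma abs_latNorm_sub_latNorm_sub_le (k h : Fin d → ℤ) :
    |latNorm k - latNorm (k - h)| ≤ latNorm h := by
  simpa [latNorm_eq_norm, rvec_sub] using abs_norm_sub_norm_le (rvec k) (rvec k - rvec h)

lemma summable_one_div_latNorm_rpow {s : ℝ} (hs : (d : ℝ) < s) :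
    Summable fun h : Fin d → ℤ => 1 / latNorm h ^ s := by
  set L := Submodule.span ℤ (Set.range (EuclideanSpace.basisFun (Fin d) ℝ).toBasis)
  have hrank : Module.finrank ℤ L = d := by rw [ZLattice.rank ℝ, finrank_euclideanSpace_fin]
  have hmem (h : Fin d → ℤ) : rvec h ∈ L := by
    rw [Module.Basis.mem_span_iff_repr_mem]
    intro i
    simp [rvec]
  have hinj : Function.Injective fun h => (⟨rvec h, hmem h⟩ : L) := fun a b hab =>
    rvec_injective (congrArg Subtype.val hab)
  have hL := ZLattice.summable_norm_rpow L (-s) (by rw [hrank]; linarith)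
  refine (hL.comp_injective hinj).congr fun h => ?_
  show ‖rvec h‖ ^ (-s) = _
  rw [latNorm_eq_norm, Real.rpow_neg (norm_nonneg _), one_div]

open scoped InnerProductSpace in
lemma inner_cvec (ℓ : Fin d → ℤ) (a : EuclideanSpace ℂ (Fin d)) :
    ⟪cvec ℓ, a⟫_ℂ = ∑ i, a i * (ℓ i : ℂ) := by
  simp [PiLp.inner_apply, cvec, mul_comm]

lemma norm_cvec (ℓ : Fin d → ℤ) : ‖cvec ℓ‖ = ‖rvec ℓ‖ := by
  simp [EuclideanSpace.norm_eq, cvec, rvec]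

lemma norm_Phl_le (h ℓ : Fin d → ℤ) (a b : EuclideanSpace ℂ (Fin d)) :
    ‖Phl h ℓ a b‖ ≤ ‖a‖ * ‖b‖ := by
  have hcoef : ‖(∑ i, a i * (ℓ i : ℂ)) / (‖rvec ℓ‖ : ℂ)‖ ≤ ‖a‖ := by
    rw [norm_div, Complex.norm_real, norm_norm, ← inner_cvec]
    refine div_le_of_le_mul₀ (norm_nonneg _) (norm_nonneg _) ?_
    simpa [norm_cvec, mul_comm] using norm_inner_le_norm (𝕜 := ℂ) (cvec ℓ) a
  rw [Phl, norm_smul]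
  gcongr
  exact Submodule.norm_orthogonalProjectionOnto_apply_le _ b

lemma one_mem_bilinSet (h ℓ : Fin d → ℤ) : 1 ∈ bilinSet h ℓ :=
  ⟨zero_le_one, fun a b _ _ => by simpa using norm_Phl_le h ℓ a b⟩

lemma abs_bilinNorm_le_one (h ℓ : Fin d → ℤ) : |bilinNorm h ℓ| ≤ 1 := by
  have hbdd : BddBelow (bilinSet h ℓ) := ⟨0, fun _ hQ => hQ.1⟩
  have hnonneg : 0 ≤ bilinNorm h ℓ := le_csInf ⟨1, one_mem_bilinSet h ℓ⟩ fun _ hQ => hQ.1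
  exact abs_le.2 ⟨by linarith, csInf_le hbdd (one_mem_bilinSet h ℓ)⟩

lemma Gterm_le {p n : ℝ} (hn : 1 ≤ n) (hp : 2 ≤ p) {k h : Fin d → ℤ} (h0 : h ≠ 0)
    (hk : h ≠ k) :
    Gterm p n k h ≤
      2 ^ (2 * p - 4) * p ^ 2 *
        (1 / latNorm h ^ (2 * n - 2) + 1 / latNorm (k - h) ^ (2 * n - 2)) :=
  sq_rpow_sub_rpow_mul_sq_div_le (latNorm_pos h0) (latNorm_pos (sub_ne_zero.2 hk.symm))
    (latNorm_nonneg k) (abs_latNorm_sub_latNorm_sub_le k h) (abs_bilinNorm_le_one h (k - h)) hn hp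

end Lattice

open Function in
lemma summable_and_tsum_le_of_le_add_comp {α β : Type*} {f : α → ℝ} {g : β → ℝ}
    {e₁ e₂ : α → β} (he₁ : Injective e₁) (he₂ : Injective e₂) (hf : ∀ x, 0 ≤ f x)
    (hg : ∀ y, 0 ≤ g y) (hgs : Summable g) {C : ℝ} (hC : 0 ≤ C)
    (hfg : ∀ x, f x ≤ C * (g (e₁ x) + g (e₂ x))) :
    Summable f ∧ ∑' x, f x ≤ 2 * C * ∑' y, g y := by
  have hs₁ : Summable fun x => g (e₁ x) := hgs.comp_injective he₁
  have hs₂ : Summable fun x => g (e₂ x) := hgs.comp_injective he₂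
  have hsum : Summable fun x => C * (g (e₁ x) + g (e₂ x)) := (hs₁.add hs₂).mul_left C
  have hfs : Summable f := hsum.of_nonneg_of_le hf hfg
  refine ⟨hfs, ?_⟩
  calc ∑' x, f x ≤ ∑' x, C * (g (e₁ x) + g (e₂ x)) := hfs.tsum_le_tsum hfg hsum
    _ = C * (∑' x, g (e₁ x) + ∑' x, g (e₂ x)) := by rw [tsum_mul_left, hs₁.tsum_add hs₂]
    _ ≤ C * (∑' y, g y + ∑' y, g y) := by
      gcongr
      · exact tsum_comp_le_tsum_of_inj hgs hg he₁
      · exact tsum_comp_le_tsum_of_inj hgs hg he₂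
    _ = 2 * C * ∑' y, g y := by ring

/-- Let `p ≥ n > d/2 + 1` (`d ≥ 2`). Then `ζ_{2n-2} = Σ_{h≠0} |h|^{-(2n-2)}` is finite, and
for every `k ∈ ℤ^d \ {0}` the sum defining
`G_{pn}(k) = 4 Σ_{h ∉ {0,k}} (|k|^p - |k-h|^p)² |P_{h,k-h}|² /
  (|h|^p|k-h|^{n-1} + |h|^n|k-h|^{p-1})²`
is finite and `G_{pn}(k) ≤ 2^{2p} p² ζ_{2n-2}`. -/
theorem Gpn_finite_and_bounded (d : ℕ) (hd : 2 ≤ d) (p n : ℝ) (hpn : n ≤ p)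
    (hn : (d : ℝ) / 2 + 1 < n) :
    Summable (fun h : {h : Fin d → ℤ // h ≠ 0} =>
      1 / latNorm (h : Fin d → ℤ) ^ (2 * n - 2)) ∧
    ∀ k : Fin d → ℤ, k ≠ 0 →
      Summable (fun h : {h : Fin d → ℤ // h ≠ 0 ∧ h ≠ k} =>
        Gterm p n k (h : Fin d → ℤ)) ∧
      4 * ∑' h : {h : Fin d → ℤ // h ≠ 0 ∧ h ≠ k}, Gterm p n k (h : Fin d → ℤ) ≤
        2 ^ (2 * p) * p ^ 2 *
          ∑' h : {h : Fin d → ℤ // h ≠ 0}, 1 / latNorm (h : Fin d → ℤ) ^ (2 * n - 2) := by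
  have hn2 : 2 ≤ n := by linarith [show (2 : ℝ) ≤ d by exact_mod_cast hd]
  set ζ : {h : Fin d → ℤ // h ≠ 0} → ℝ := fun h => 1 / latNorm (h : Fin d → ℤ) ^ (2 * n - 2)
  have hζ : Summable ζ := (summable_one_div_latNorm_rpow (by linarith)).subtype _
  have hζ_nonneg (h) : 0 ≤ ζ h := one_div_nonneg.2 (Real.rpow_nonneg (latNorm_nonneg _) _)
  refine ⟨hζ, fun k _ => ?_⟩
  obtain ⟨hsum, hle⟩ := summable_and_tsum_le_of_le_add_comp (g := ζ)
    (f := fun h : {h : Fin d → ℤ // h ≠ 0 ∧ h ≠ k} => Gterm p n k h)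
    (C := 2 ^ (2 * p - 4) * p ^ 2)
    (e₁ := fun h => ⟨h, h.2.1⟩) (e₂ := fun h => ⟨k - h, sub_ne_zero.2 h.2.2.symm⟩)
    (fun a b hab => by simpa [Subtype.ext_iff] using hab)
    (fun a b hab => by simpa [Subtype.ext_iff] using hab)
    (fun h => by unfold Gterm; positivity) hζ_nonneg hζ (by positivity)
    (fun h => Gterm_le (by linarith) (by linarith) h.2.1 h.2.2)
  refine ⟨hsum, ?_⟩
  have hZ : 0 ≤ 2 ^ (2 * p) * p ^ 2 * ∑' h, ζ h :=
    mul_nonneg (by positivity) (tsum_nonneg hζ_nonneg)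
  calc 4 * ∑' h : {h : Fin d → ℤ // h ≠ 0 ∧ h ≠ k}, Gterm p n k (h : Fin d → ℤ)
      ≤ 4 * (2 * (2 ^ (2 * p - 4) * p ^ 2) * ∑' h, ζ h) := by gcongr
    _ ≤ 2 ^ (2 * p) * p ^ 2 * ∑' h, ζ h := by
      rw [Real.rpow_sub two_pos]
      linarith
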